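/- arXiv:2406.07751 — 3 statements merged into one kernel-verified Lean document; each statement's English description precedes it below -/
import Mathlib

section
/- Let b ≥ 2, Y, R, x₁, x₀ ∈ ℕ with Y ≥ 1 and x₁, x₀ < b, and set M = b²R + bx₁ + x₀. Then the largest natural number β with 2bYβ + β² ≤ M equals ⌊√((bY)² + M) − bY⌋, i.e. equals ⌊√((bY)² + M)⌋ − bY. -/
theorem digit_guess_formula (b Y R x₁ x₀ y : ℕ) (hb : 2 ≤ b) (hY : 1 ≤ Y)
    (hx₁ : x₁ < b) (hx₀ : x₀ < b)
    (hy : IsGreatest {β : ℕ | 2 * b * Y * β + β^2 ≤ b^2 * R + b * x₁ + x₀} y) :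
    y = Nat.sqrt ((b * Y)^2 + (b^2 * R + b * x₁ + x₀)) - b * Y := by
  set A := b * Y with hA
  set M := b^2 * R + b * x₁ + x₀ with hM
  set s := Nat.sqrt (A^2 + M) with hs
  have hAs : A ≤ s := by
    have : A^2 ≤ A^2 + M := by nlinarith
    calc A = Nat.sqrt (A^2) := (Nat.sqrt_eq' A).symm
    _ ≤ s := Nat.sqrt_le_sqrt this
  have h1 : A + y ≤ s := by
    rw [hs]
    apply Nat.le_sqrt'.mpr
    have h := hy.1
    simp only [Set.mem_setOf_eq] at h
    have : (A + y)^2 = A^2 + (2 * b * Y * y + y^2) := by rw [hA]; ring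
    omega
  have h2 : s - A ≤ y := by
    apply hy.2
    simp only [Set.mem_setOf_eq]
    have hsq : s^2 ≤ A^2 + M := Nat.sqrt_le' _
    have ht : s = A + (s - A) := by omega
    have : (A + (s - A))^2 = A^2 + (2 * b * Y * (s - A) + (s - A)^2) := by rw [hA]; ring
    rw [ht] at hsq
    omega
  omega
end

section
/- Let b ≥ 2 and suppose natural numbers Y, A satisfy Y² ≤ A < (Y+1)² and R = A − Y². Let x₁, x₀ < b and let y be the largest β with (bY + β)² ≤ b²A + bx₁ + x₀. Then (bY + y)² ≤ b²A + bx₁ + x₀ < (bY + y + 1)², and (b²A + bx₁ + x₀) − (bY + y)² = b²R + bx₁ + x₀ − (2bYy + y²). -/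
theorem bombelli_maintenance (b Y A R x₁ x₀ y : ℕ) (hb : 2 ≤ b)
    (hYA : Y^2 ≤ A) (hAY : A < (Y + 1)^2) (hR : R = A - Y^2)
    (hx₁ : x₁ < b) (hx₀ : x₀ < b)
    (hy : IsGreatest {β : ℕ | (b * Y + β)^2 ≤ b^2 * A + b * x₁ + x₀} y) :
    ((b * Y + y)^2 ≤ b^2 * A + b * x₁ + x₀ ∧
        b^2 * A + b * x₁ + x₀ < (b * Y + y + 1)^2) ∧
      (b^2 * A + b * x₁ + x₀) - (b * Y + y)^2 =
        b^2 * R + b * x₁ + x₀ - (2 * b * Y * y + y^2) := by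
  obtain ⟨hmem, hub⟩ := hy
  refine ⟨⟨hmem, ?_⟩, ?_⟩
  · by_contra h
    push_neg at h
    have := hub (show y + 1 ∈ _ by simpa [add_assoc] using h)
    omega
  · have hsq : (b * Y + y)^2 = b^2 * Y^2 + (2 * b * Y * y + y^2) := by ring
    have hq : b^2 * Y^2 ≤ b^2 * A := Nat.mul_le_mul_left _ hYA
    have hRr : b^2 * R = b^2 * A - b^2 * Y^2 := by
      rw [hR, Nat.mul_sub]
    rw [hsq, hRr]
    omega
end

section
/- Let X be a natural number with 2n base-b digits (b ≥ 2), and let Y, R be the outputs of Bombelli's shift-and-subtract algorithm: Y is built digit by digit where each digit y_i = max{β | 2bY_{i+1}β + β² ≤ (R_{i+1} x_{2i+1} x_{2i})_b} and R_i = (R_{i+1} x_{2i+1} x_{2i})_b − (2bY_{i+1}y_i + y_i²). Then Y² ≤ X < (Y+1)² and R = X − Y². -/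
/-- One iteration of Bombelli's shift-and-subtract algorithm in radix `b`:
given the current partial root `Y` and partial remainder `R`, bring down the
next two digits `d = (x₁, x₀)` and compute the next digit
`y = max {β | 2·b·Y·β + β² ≤ b²·R + b·x₁ + x₀}` (it is always `< b`, so
searching up to `b` suffices), returning the new partial root and remainder. -/
def bombelliStep (b : ℕ) (YR : ℕ × ℕ) (d : ℕ × ℕ) : ℕ × ℕ :=
  let Y := YR.1
  let R := YR.2
  let M := b ^ 2 * R + b * d.1 + d.2
  let y := Nat.findGreatest (fun β => 2 * b * Y * β + β ^ 2 ≤ M) b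
  (b * Y + y, M - (2 * b * Y * y + y ^ 2))

/-- Bombelli's algorithm on the list of digit pairs of the radicand. -/
def bombelli (b : ℕ) (ds : List (ℕ × ℕ)) : ℕ × ℕ :=
  ds.foldl (bombelliStep b) (0, 0)

/-- The natural number whose radix-`b` digits (from most significant)
are given by the list of digit pairs `ds`. -/
def radixVal (b : ℕ) (ds : List (ℕ × ℕ)) : ℕ :=
  ds.foldl (fun acc d => b ^ 2 * acc + b * d.1 + d.2) 0


/-!
The invariant is that the state `(Y, R)` after reading the first pairs of digits, of value `N`,
satisfies `Y² + R = N` and `R ≤ 2Y`, i.e. `Y = ⌊√N⌋` with remainder `R`. Bringing down two digits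
turns `N` into `b²N + (x₁x₀)_b`, and `(bY + y)² = b²Y² + 2bYy + y²`, so subtracting `2bYy + y²`
from `b²R + (x₁x₀)_b` keeps the first equation. The maximality of `y` says that `y + 1` overshoots,
which is `R' ≤ 2(bY + y)`; it is an honest maximum (`y < b`) because `R ≤ 2Y` forces the digit
`β = b` to overshoot already.
-/

theorem Nat.findGreatest_spec_and_not_succ {P : ℕ → Prop} [DecidablePred P] {n : ℕ}
    (h0 : P 0) (hn : ¬ P n) :
    P (Nat.findGreatest P n) ∧ ¬ P (Nat.findGreatest P n + 1) := by
  have hspec : P (Nat.findGreatest P n) := Nat.findGreatest_spec (Nat.zero_le n) h0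
  have hlt : Nat.findGreatest P n < n :=
    (Nat.findGreatest_le n).lt_of_ne fun h => hn (h ▸ hspec)
  exact ⟨hspec, Nat.findGreatest_is_greatest (Nat.lt_succ_self _) hlt⟩

def IsSqrtRem (N Y R : ℕ) : Prop :=
  Y ^ 2 + R = N ∧ R ≤ 2 * Y

theorem IsSqrtRem.zero : IsSqrtRem 0 0 0 := ⟨rfl, le_rfl⟩

theorem IsSqrtRem.sq_le_lt_and_eq {N Y R : ℕ} (h : IsSqrtRem N Y R) :
    Y ^ 2 ≤ N ∧ N < (Y + 1) ^ 2 ∧ R = N - Y ^ 2 := by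
  obtain ⟨hN, hR⟩ := h
  refine ⟨by omega, ?_, by omega⟩
  nlinarith

theorem isSqrtRem_bombelliStep {b N Y R x₁ x₀ : ℕ} (h : IsSqrtRem N Y R)
    (hx₁ : x₁ < b) (hx₀ : x₀ < b) :
    IsSqrtRem (b ^ 2 * N + b * x₁ + x₀) (bombelliStep b (Y, R) (x₁, x₀)).1
      (bombelliStep b (Y, R) (x₁, x₀)).2 := by
  obtain ⟨hN, hR⟩ := h
  set M := b ^ 2 * R + b * x₁ + x₀
  have hlow : b * x₁ + x₀ < b ^ 2 := by nlinarith
  have hM : ¬ 2 * b * Y * b + b ^ 2 ≤ M := by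
    have : b ^ 2 * R ≤ b ^ 2 * (2 * Y) := Nat.mul_le_mul_left _ hR
    have : 2 * b * Y * b + b ^ 2 = b ^ 2 * (2 * Y) + b ^ 2 := by ring
    omega
  obtain ⟨hfit, hover⟩ := Nat.findGreatest_spec_and_not_succ
    (P := fun β => 2 * b * Y * β + β ^ 2 ≤ M) (by simp) hM
  set y := Nat.findGreatest (fun β => 2 * b * Y * β + β ^ 2 ≤ M) b
  change IsSqrtRem (b ^ 2 * N + b * x₁ + x₀) (b * Y + y) (M - (2 * b * Y * y + y ^ 2))
  obtain ⟨r, hr⟩ := Nat.exists_eq_add_of_le hfit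
  rw [hr, Nat.add_sub_cancel_left]
  have hsq : (b * Y + y) ^ 2 = b ^ 2 * Y ^ 2 + (2 * b * Y * y + y ^ 2) := by ring
  have hsucc : 2 * b * Y * (y + 1) + (y + 1) ^ 2 = 2 * b * Y * y + y ^ 2 + 2 * (b * Y + y) + 1 := by
    ring
  subst hN
  constructor
  · rw [hsq, mul_add]
    omega
  · omega

theorem isSqrtRem_foldl_bombelliStep {b : ℕ} {ds : List (ℕ × ℕ)}
    (hds : ∀ d ∈ ds, d.1 < b ∧ d.2 < b) {N Y R : ℕ} (h : IsSqrtRem N Y R) :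
    IsSqrtRem (ds.foldl (fun acc d => b ^ 2 * acc + b * d.1 + d.2) N)
      (ds.foldl (bombelliStep b) (Y, R)).1 (ds.foldl (bombelliStep b) (Y, R)).2 := by
  induction ds generalizing N Y R with
  | nil => exact h
  | cons d ds ih =>
    obtain ⟨hd₁, hd₀⟩ := hds d List.mem_cons_self
    exact ih (fun e he => hds e (List.mem_cons_of_mem _ he))
      (isSqrtRem_bombelliStep h hd₁ hd₀)

theorem bombelli_sound_general (b : ℕ) (ds : List (ℕ × ℕ))
    (hdigits : ∀ d ∈ ds, d.1 < b ∧ d.2 < b) :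
    (bombelli b ds).1 ^ 2 ≤ radixVal b ds ∧
      radixVal b ds < ((bombelli b ds).1 + 1) ^ 2 ∧
      (bombelli b ds).2 = radixVal b ds - (bombelli b ds).1 ^ 2 :=
  (isSqrtRem_foldl_bombelliStep hdigits IsSqrtRem.zero).sq_le_lt_and_eq

theorem bombelli_sound (b : ℕ) (hb : 2 ≤ b) (ds : List (ℕ × ℕ))
    (hdigits : ∀ d ∈ ds, d.1 < b ∧ d.2 < b) :
    (bombelli b ds).1 ^ 2 ≤ radixVal b ds ∧
      radixVal b ds < ((bombelli b ds).1 + 1) ^ 2 ∧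
      (bombelli b ds).2 = radixVal b ds - (bombelli b ds).1 ^ 2 :=
  bombelli_sound_general b ds hdigits
end
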